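/- arXiv:2511.10777 — 5 statements merged into one kernel-verified Lean document; each statement's English description precedes it below -/
import Mathlib

section
/- Let n, m, d, k, l be positive integers with l ≤ k and k + l ≤ n. Every (n,m,d,k,l,1)-list union-free binary matrix M ∈ {0,1}^{m×n} is (k,l)-distinguishable. -/
open scoped Classical

/-- The support of column `j` of a binary matrix `M`. -/
def colSupp {m n : ℕ} (M : Fin m → Fin n → Bool) (j : Fin n) : Finset (Fin m) :=
  Finset.univ.filter fun i => M i j = true

/-- The support of row `i` of a binary matrix `M`. -/
def rowSupp {m n : ℕ} (M : Fin m → Fin n → Bool) (i : Fin m) : Finset (Fin n) :=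
  Finset.univ.filter fun j => M i j = true

/-- The support of a binary vector. -/
def bsupp {n : ℕ} (x : Fin n → Bool) : Finset (Fin n) :=
  Finset.univ.filter fun j => x j = true

/-- `M` is an `(n,m,d,k,l,α)`-list union-free matrix: every column has Hamming weight
exactly `d`, and for every pair of disjoint sets `S, T ⊆ [n]` with `|S| = l`, `|T| = k`,
there exists `j ∈ S` with `|supp(M_j) ∩ ⋃_{i ∈ (S∪T)\{j}} supp(M_i)| < α·d`. -/
def ListUF (n m d k l : ℕ) (α : ℝ) (M : Fin m → Fin n → Bool) : Prop :=
  (∀ j, (colSupp M j).card = d) ∧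
  ∀ S T : Finset (Fin n), Disjoint S T → S.card = l → T.card = k →
    ∃ j ∈ S,
      (((colSupp M j) ∩ (((S ∪ T).erase j).biUnion (colSupp M))).card : ℝ) < α * d

/-- `M` is `(k,l)`-distinguishable: for every binary vector `x` with `|supp(x)| = k`,
more than `k - l` indices `i ∈ supp(x)` are isolated by some row `M^j`, i.e.
`supp(M^j) ∩ supp(x) = {i}`. -/
def Distinguishable {m n : ℕ} (k l : ℕ) (M : Fin m → Fin n → Bool) : Prop :=
  ∀ x : Fin n → Bool, (bsupp x).card = k →
    k - l <
      ((bsupp x).filter fun i => ∃ j : Fin m, rowSupp M j ∩ bsupp x = {i}).card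

/-- Every `(n,m,d,k,l,1)`-list union-free binary matrix is `(k,l)`-distinguishable. -/
theorem listUF_is_distinguishable (n m d k l : ℕ)
    (hn : 0 < n) (hm : 0 < m) (hd : 0 < d) (hk : 0 < k) (hl : 0 < l)
    (hlk : l ≤ k) (hkln : k + l ≤ n)
    (M : Fin m → Fin n → Bool) (hM : ListUF n m d k l 1 M) :
    Distinguishable k l M := by
  intro x hx
  by_contra hcon
  push_neg at hcon
  set B := bsupp x with hB
  set F := B.filter (fun i => ∃ j : Fin m, rowSupp M j ∩ B = {i}) with hF
  have hFB : F ⊆ B := Finset.filter_subset _ _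
  have hFle : F.card ≤ B.card := Finset.card_le_card hFB
  have hsd : (B \ F).card = B.card - F.card := Finset.card_sdiff_of_subset hFB
  have hD : l ≤ (B \ F).card := by omega
  obtain ⟨S, hSsub, hScard⟩ := Finset.exists_subset_card_eq (s := B \ F) hD
  have hSB : S ⊆ B := hSsub.trans (Finset.sdiff_subset)
  have hcompl : l ≤ Bᶜ.card := by
    have : Bᶜ.card = n - B.card := by
      rw [Finset.card_compl]; simp
    omega
  obtain ⟨E, hEsub, hEcard⟩ := Finset.exists_subset_card_eq (s := Bᶜ) hcompl
  have hEB : Disjoint B E := by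
    exact Disjoint.mono_right hEsub disjoint_compl_right
  set T := (B \ S) ∪ E with hT
  have hdisj : Disjoint S T := by
    rw [hT, Finset.disjoint_union_right]
    exact ⟨Finset.sdiff_disjoint.symm, (hEB.mono_left hSB)⟩
  have hTcard : T.card = k := by
    rw [hT, Finset.card_union_of_disjoint (hEB.mono_left Finset.sdiff_subset),
      Finset.card_sdiff_of_subset hSB, hScard, hEcard, hx]
    omega
  obtain ⟨j, hjS, hlt⟩ := hM.2 S T hdisj hScard hTcard
  rw [one_mul] at hlt
  have hlt' : ((colSupp M j) ∩ (((S ∪ T).erase j).biUnion (colSupp M))).card < d := by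
    exact_mod_cast hlt
  have hBST : B ⊆ S ∪ T := by
    intro i hi
    by_cases h : i ∈ S
    · exact Finset.mem_union_left _ h
    · exact Finset.mem_union_right _ (Finset.mem_union_left _ (Finset.mem_sdiff.mpr ⟨hi, h⟩))
  have hsub : (colSupp M j) ∩ ((B.erase j).biUnion (colSupp M)) ⊆
      (colSupp M j) ∩ (((S ∪ T).erase j).biUnion (colSupp M)) :=
    Finset.inter_subset_inter le_rfl
      (Finset.biUnion_subset_biUnion_of_subset_left _ (Finset.erase_subset_erase _ hBST))
  have hltB : ((colSupp M j) ∩ ((B.erase j).biUnion (colSupp M))).card < d :=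
    lt_of_le_of_lt (Finset.card_le_card hsub) hlt'
  have hnsub : ¬ (colSupp M j ⊆ (B.erase j).biUnion (colSupp M)) := by
    intro h
    rw [Finset.inter_eq_left.mpr h, hM.1 j] at hltB
    exact lt_irrefl _ hltB
  obtain ⟨p, hpcol, hpnot⟩ := Finset.not_subset.mp hnsub
  have hjB : j ∈ B := hSB hjS
  have hjF : j ∈ F := by
    rw [hF, Finset.mem_filter]
    refine ⟨hjB, p, ?_⟩
    ext i
    simp only [Finset.mem_inter, Finset.mem_singleton]
    constructor
    · rintro ⟨hir, hiB⟩
      by_contra hne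
      apply hpnot
      refine Finset.mem_biUnion.mpr ⟨i, Finset.mem_erase.mpr ⟨hne, hiB⟩, ?_⟩
      simpa [colSupp] using (by simpa [rowSupp] using hir : M p i = true)
    · rintro rfl
      refine ⟨?_, hjB⟩
      simp only [rowSupp, Finset.mem_filter, Finset.mem_univ, true_and]
      simpa [colSupp] using hpcol
  have := hSsub hjS
  rw [Finset.mem_sdiff] at this
  exact this.2 hjF
end

section
/- There exists a constant C > 0 such that for all positive integers n, k with k + 1 ≤ n, there exists a binary matrix A ∈ {0,1}^{m×n} which is (n,m,d,k,1,1/2)-list union-free with m ≤ C·k²·log(n/k) rows and every column of Hamming weight exactly d for some d ≤ C·k·log(n/k). -/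
open scoped Classical

private lemma succ_pow_le_three_mul (s : ℕ) : (s + 1) ^ s ≤ 3 * s ^ s := by
  rcases Nat.eq_zero_or_pos s with h | h
  · simp [h]
  have hs : (0:ℝ) < (s:ℝ) := by exact_mod_cast h
  have key : ((s:ℝ) + 1) ^ s ≤ 3 * (s:ℝ) ^ s := by
    have h1 : (s:ℝ) + 1 = (1 + 1/(s:ℝ)) * s := by field_simp
    have h2 : (1 + 1/(s:ℝ)) ≤ Real.exp (1/(s:ℝ)) := by
      have := Real.add_one_le_exp (1/(s:ℝ)); linarith
    calc ((s:ℝ)+1)^s = (1 + 1/(s:ℝ))^s * (s:ℝ)^s := by rw [h1, mul_pow]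
    _ ≤ Real.exp (1/(s:ℝ)) ^ s * (s:ℝ)^s := by
        gcongr
    _ = Real.exp 1 * (s:ℝ)^s := by
        rw [← Real.exp_nat_mul]
        congr 1
        field_simp
    _ ≤ 3 * (s:ℝ)^s := by
        have := Real.exp_one_lt_d9
        have h3 : (0:ℝ) ≤ (s:ℝ)^s := by positivity
        nlinarith
  have : ((s+1 : ℕ):ℝ) ^ s ≤ ((3 * s ^ s : ℕ) : ℝ) := by push_cast; linarith
  exact_mod_cast this

private lemma pow_self_le_three_pow_mul_factorial (s : ℕ) :
    s ^ s ≤ 3 ^ s * (Nat.factorial s) := by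
  induction s with
  | zero => simp
  | succ s ih =>
    calc (s+1)^(s+1) = (s+1) * (s+1)^s := by ring
    _ ≤ (s+1) * (3 * s^s) := Nat.mul_le_mul_left _ (succ_pow_le_three_mul s)
    _ ≤ (s+1) * (3 * (3^s * (Nat.factorial s))) := by
        apply Nat.mul_le_mul_left
        exact Nat.mul_le_mul_left _ ih
    _ = 3^(s+1) * Nat.factorial (s+1) := by rw [Nat.factorial_succ]; ring

private lemma card_contains_le {m : ℕ} (d : ℕ) (A : Finset (Fin m)) :
    (((Finset.univ : Finset (Fin m)).powersetCard d).filter (fun E => A ⊆ E)).card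
      ≤ (m - A.card).choose (d - A.card) := by
  have htarget : ((Finset.univ \ A : Finset (Fin m)).powersetCard (d - A.card)).card
      = (m - A.card).choose (d - A.card) := by
    rw [Finset.card_powersetCard, Finset.card_sdiff_of_subset (Finset.subset_univ A),
      Finset.card_univ, Fintype.card_fin]
  rw [← htarget]
  apply Finset.card_le_card_of_injOn (fun E => E \ A)
  · intro E hE
    simp only [Finset.mem_coe, Finset.mem_filter, Finset.mem_powersetCard] at hE ⊢
    obtain ⟨⟨-, hcard⟩, hAE⟩ := hE
    exact ⟨Finset.sdiff_subset_sdiff (Finset.subset_univ E) (le_refl A),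
      by rw [Finset.card_sdiff_of_subset hAE, hcard]⟩
  · intro E1 h1 E2 h2 heq
    simp only [Finset.mem_coe, Finset.mem_filter, Finset.mem_powersetCard] at h1 h2
    have e1 := Finset.sdiff_union_of_subset h1.2
    have e2 := Finset.sdiff_union_of_subset h2.2
    rw [← e1, ← e2]; simp only at heq; rw [heq]

private lemma card_bad_le {m : ℕ} (d s : ℕ) (D0 : Finset (Fin m)) (hD0 : D0.card = d) :
    (((Finset.univ : Finset (Fin m)).powersetCard d).filter
      (fun E => s ≤ (D0 ∩ E).card)).card ≤ d.choose s * (m - s).choose (d - s) := by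
  have hsub : ((Finset.univ : Finset (Fin m)).powersetCard d).filter
        (fun E => s ≤ (D0 ∩ E).card) ⊆
      (D0.powersetCard s).biUnion (fun A =>
        ((Finset.univ : Finset (Fin m)).powersetCard d).filter (fun E => A ⊆ E)) := by
    intro E hE
    simp only [Finset.mem_filter] at hE
    obtain ⟨hEP, hsE⟩ := hE
    obtain ⟨Asub, hA1, hA2⟩ := Finset.exists_subset_card_eq hsE
    refine Finset.mem_biUnion.mpr ⟨Asub, ?_, ?_⟩
    · exact Finset.mem_powersetCard.mpr ⟨hA1.trans Finset.inter_subset_left, hA2⟩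
    · exact Finset.mem_filter.mpr ⟨hEP, hA1.trans Finset.inter_subset_right⟩
  calc _ ≤ _ := Finset.card_le_card hsub
  _ ≤ ∑ A ∈ D0.powersetCard s,
        (((Finset.univ : Finset (Fin m)).powersetCard d).filter (fun E => A ⊆ E)).card :=
      Finset.card_biUnion_le
  _ ≤ ∑ A ∈ D0.powersetCard s, (m - s).choose (d - s) := by
      apply Finset.sum_le_sum
      intro A hA
      have hAcard : A.card = s := (Finset.mem_powersetCard.mp hA).2
      have := card_contains_le (m := m) d A
      rwa [hAcard] at this
  _ = d.choose s * (m - s).choose (d - s) := by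
      rw [Finset.sum_const, Finset.card_powersetCard, hD0, smul_eq_mul]

private lemma exists_family (m d s : ℕ) :
    ∀ t : ℕ, t * (d.choose s * (m - s).choose (d - s)) < m.choose d →
    ∃ D : Fin t → Finset (Fin m), (∀ j, (D j).card = d) ∧
      ∀ i j, i ≠ j → (D i ∩ D j).card < s := by
  intro t
  induction t with
  | zero => exact fun _ => ⟨Fin.elim0, fun j => j.elim0, fun i => i.elim0⟩
  | succ t ih =>
    intro h
    have ht : t * (d.choose s * (m - s).choose (d - s)) < m.choose d :=
      lt_of_le_of_lt (Nat.mul_le_mul_right _ (Nat.le_succ t)) h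
    obtain ⟨D, hc, hi⟩ := ih ht
    set P := (Finset.univ : Finset (Fin m)).powersetCard d with hP
    have hGood : (P.filter (fun E => ∀ i : Fin t, (D i ∩ E).card < s)).Nonempty := by
      by_contra hempty
      rw [Finset.not_nonempty_iff_eq_empty] at hempty
      have hsub : P ⊆ Finset.univ.biUnion
          (fun i : Fin t => P.filter (fun E => s ≤ (D i ∩ E).card)) := by
        intro E hE
        have hnall : ¬ ∀ i, (D i ∩ E).card < s := by
          intro hall
          exact Finset.eq_empty_iff_forall_notMem.mp hempty E
            (Finset.mem_filter.mpr ⟨hE, hall⟩)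
        push_neg at hnall
        obtain ⟨i, hi'⟩ := hnall
        exact Finset.mem_biUnion.mpr ⟨i, Finset.mem_univ _, Finset.mem_filter.mpr ⟨hE, hi'⟩⟩
      have h4 : P.card ≤ t * (d.choose s * (m - s).choose (d - s)) := by
        calc P.card ≤ _ := Finset.card_le_card hsub
        _ ≤ ∑ i : Fin t, (P.filter (fun E => s ≤ (D i ∩ E).card)).card :=
            Finset.card_biUnion_le
        _ ≤ ∑ _i : Fin t, d.choose s * (m - s).choose (d - s) :=
            Finset.sum_le_sum (fun i _ => card_bad_le d s (D i) (hc i))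
        _ = t * (d.choose s * (m - s).choose (d - s)) := by
            rw [Finset.sum_const, Finset.card_univ, Fintype.card_fin, smul_eq_mul]
      have h5 : P.card = m.choose d := by
        rw [hP, Finset.card_powersetCard, Finset.card_univ, Fintype.card_fin]
      omega
    obtain ⟨E, hE⟩ := hGood
    obtain ⟨hEP, hEgood⟩ := Finset.mem_filter.mp hE
    have hEcard : E.card = d := (Finset.mem_powersetCard.mp hEP).2
    refine ⟨Fin.snoc D E, ?_, ?_⟩
    · intro j
      rcases Fin.eq_castSucc_or_eq_last j with ⟨j', rfl⟩ | rfl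
      · rw [Fin.snoc_castSucc]; exact hc j'
      · rw [Fin.snoc_last]; exact hEcard
    · intro i j hij
      rcases Fin.eq_castSucc_or_eq_last i with ⟨i', rfl⟩ | rfl <;>
        rcases Fin.eq_castSucc_or_eq_last j with ⟨j', rfl⟩ | rfl
      · rw [Fin.snoc_castSucc, Fin.snoc_castSucc]
        exact hi i' j' (fun hh => hij (by rw [hh]))
      · rw [Fin.snoc_castSucc, Fin.snoc_last]
        exact hEgood i'
      · rw [Fin.snoc_last, Fin.snoc_castSucc, Finset.inter_comm]
        exact hEgood j'
      · exact absurd rfl hij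

private lemma master (k s n : ℕ) (hk : 1 ≤ k) (hs : 1 ≤ s) (hn : n ≤ 2 ^ s) :
    n * ((2*k*s).choose s * (48*k^2*s - s).choose (2*k*s - s)) < (48*k^2*s).choose (2*k*s) := by
  set d := 2*k*s with hd
  set m := 48*k^2*s with hm
  have hks : s ≤ k^2*s := Nat.le_mul_of_pos_left s (by positivity)
  have hsd : s ≤ d := by
    have : s ≤ 2*k*s := Nat.le_mul_of_pos_left s (by positivity)
    simpa [hd] using this
  have hdm : d ≤ m := by
    rw [hd, hm]
    apply Nat.mul_le_mul_right
    nlinarith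
  have hsm : s ≤ m := hsd.trans hdm
  have hm' : m = 48*(k^2*s) := by rw [hm]; ring
  have h47 : 47*(k^2*s) + 1 ≤ m + 1 - s := by omega
  have nkey : n * ((d^s)^2 * 3^s) < (m+1-s)^s * s^s := by
    have e1 : (d^s)^2 * 3^s = (12*(k^2*s^2))^s := by
      rw [hd, ← pow_mul, pow_mul']
      rw [← mul_pow]
      congr 1
      ring
    calc n * ((d^s)^2 * 3^s) = n * (12*(k^2*s^2))^s := by rw [e1]
    _ ≤ 2^s * (12*(k^2*s^2))^s := Nat.mul_le_mul_right _ hn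
    _ = (24*(k^2*s^2))^s := by rw [← mul_pow]; congr 1; ring
    _ < (47*(k^2*s^2))^s := by
        apply Nat.pow_lt_pow_left _ (by omega)
        have : 0 < k^2*s^2 := by positivity
        omega
    _ ≤ ((m+1-s)*s)^s := by
        apply Nat.pow_le_pow_left
        calc 47*(k^2*s^2) = (47*(k^2*s))*s := by ring
        _ ≤ (m+1-s)*s := Nat.mul_le_mul_right _ (by omega)
    _ = (m+1-s)^s * s^s := mul_pow _ _ _
  have hF : (0:ℝ) < (Nat.factorial s : ℝ) := by exact_mod_cast Nat.factorial_pos s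
  have A1 : (d.choose s : ℝ) * (Nat.factorial s : ℝ) ≤ (d:ℝ)^s := by
    have : d.choose s * Nat.factorial s ≤ d ^ s := by
      rw [Nat.mul_comm, ← Nat.descFactorial_eq_factorial_mul_choose]
      exact Nat.descFactorial_le_pow d s
    exact_mod_cast this
  have A2 : ((m+1-s : ℕ) : ℝ)^s ≤ (m.choose s : ℝ) * (Nat.factorial s : ℝ) := by
    have : (m+1-s)^s ≤ m.choose s * Nat.factorial s := by
      rw [Nat.mul_comm, ← Nat.descFactorial_eq_factorial_mul_choose]
      exact Nat.pow_sub_le_descFactorial m s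
    exact_mod_cast this
  have A3 : (s:ℝ)^s ≤ 3^s * (Nat.factorial s : ℝ) := by
    exact_mod_cast pow_self_le_three_pow_mul_factorial s
  have h2 : n * (d.choose s)^2 < m.choose s := by
    have key : (n:ℝ) * ((d:ℝ)^s)^2 * 3^s < ((m+1-s:ℕ):ℝ)^s * (s:ℝ)^s := by
      have hcast : ((n * ((d^s)^2 * 3^s) : ℕ) : ℝ) < (((m+1-s)^s * s^s : ℕ) : ℝ) := by
        exact_mod_cast nkey
      push_cast at hcast
      linarith
    have L : (n:ℝ) * (d.choose s:ℝ)^2 * ((Nat.factorial s:ℝ)^2 * 3^s)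
        ≤ (n:ℝ) * ((d:ℝ)^s)^2 * 3^s := by
      have hsq : ((d.choose s:ℝ) * (Nat.factorial s:ℝ))^2 ≤ ((d:ℝ)^s)^2 := by
        apply pow_le_pow_left₀ (by positivity) A1
      calc (n:ℝ) * (d.choose s:ℝ)^2 * ((Nat.factorial s:ℝ)^2 * 3^s)
          = (n:ℝ) * ((d.choose s:ℝ) * (Nat.factorial s:ℝ))^2 * 3^s := by ring
      _ ≤ (n:ℝ) * ((d:ℝ)^s)^2 * 3^s := by
          have h3 : (0:ℝ) ≤ (3:ℝ)^s := by positivity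
          have hn0 : (0:ℝ) ≤ (n:ℝ) := Nat.cast_nonneg n
          exact mul_le_mul_of_nonneg_right (mul_le_mul_of_nonneg_left hsq hn0) h3
    have R : ((m+1-s:ℕ):ℝ)^s * (s:ℝ)^s
        ≤ (m.choose s:ℝ) * ((Nat.factorial s:ℝ)^2 * 3^s) := by
      calc ((m+1-s:ℕ):ℝ)^s * (s:ℝ)^s
          ≤ ((m.choose s:ℝ) * (Nat.factorial s:ℝ)) * (3^s * (Nat.factorial s:ℝ)) := by
            apply mul_le_mul A2 A3 (by positivity) (by positivity)
      _ = (m.choose s:ℝ) * ((Nat.factorial s:ℝ)^2 * 3^s) := by ring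
    have hfin : (n:ℝ) * (d.choose s:ℝ)^2 * ((Nat.factorial s:ℝ)^2 * 3^s)
        < (m.choose s:ℝ) * ((Nat.factorial s:ℝ)^2 * 3^s) :=
      lt_of_le_of_lt L (lt_of_lt_of_le key R)
    have := lt_of_mul_lt_mul_right hfin (by positivity)
    exact_mod_cast this
  rcases Nat.eq_zero_or_pos ((m - s).choose (d - s)) with h0 | hpos
  · rw [h0, Nat.mul_zero, Nat.mul_zero]
    exact Nat.choose_pos hdm
  · have identity : m.choose d * d.choose s = m.choose s * (m - s).choose (d - s) :=
      Nat.choose_mul hsd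
    have step : (n * (d.choose s * (m - s).choose (d - s))) * d.choose s
        < m.choose d * d.choose s := by
      have e : (n * (d.choose s * (m - s).choose (d - s))) * d.choose s
          = (n * (d.choose s)^2) * (m - s).choose (d - s) := by ring
      rw [e, identity]
      exact mul_lt_mul_of_pos_right h2 hpos
    exact lt_of_mul_lt_mul_right step (Nat.zero_le _)

private lemma listUF_of_family {n m d k s : ℕ} (hk : 0 < k) (hs : 0 < s)
    (hd : 2*k*(s-1) < d)
    (D : Fin n → Finset (Fin m)) (hcard : ∀ j, (D j).card = d)
    (hint : ∀ i j, i ≠ j → (D i ∩ D j).card < s) :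
    ListUF n m d k 1 (1/2) (fun i j => decide (i ∈ D j)) := by
  have hsupp : ∀ j, colSupp (fun i j => decide (i ∈ D j)) j = D j := by
    intro j; ext i; simp [colSupp]
  constructor
  · intro j; rw [hsupp]; exact hcard j
  · intro S T hdisj hS hT
    obtain ⟨j, rfl⟩ := Finset.card_eq_one.mp hS
    refine ⟨j, Finset.mem_singleton_self j, ?_⟩
    have hjT : j ∉ T := Finset.disjoint_singleton_left.mp hdisj
    have herase : ({j} ∪ T).erase j = T := by
      ext x
      simp only [Finset.mem_erase, Finset.mem_union, Finset.mem_singleton]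
      constructor
      · rintro ⟨hne, h | h⟩
        · exact absurd h hne
        · exact h
      · intro hx
        exact ⟨fun hh => hjT (hh ▸ hx), Or.inr hx⟩
    rw [herase]
    have hbU : T.biUnion (colSupp (fun i j => decide (i ∈ D j))) = T.biUnion D :=
      Finset.biUnion_congr rfl (fun i _ => hsupp i)
    rw [hsupp, hbU]
    have hsub : D j ∩ T.biUnion D ⊆ T.biUnion (fun i => D j ∩ D i) := by
      intro x hx
      obtain ⟨hxj, hxU⟩ := Finset.mem_inter.mp hx
      obtain ⟨i, hiT, hxi⟩ := Finset.mem_biUnion.mp hxU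
      exact Finset.mem_biUnion.mpr ⟨i, hiT, Finset.mem_inter.mpr ⟨hxj, hxi⟩⟩
    have hcount : (D j ∩ T.biUnion D).card ≤ k * (s-1) := by
      calc (D j ∩ T.biUnion D).card ≤ (T.biUnion (fun i => D j ∩ D i)).card :=
          Finset.card_le_card hsub
      _ ≤ ∑ i ∈ T, (D j ∩ D i).card := Finset.card_biUnion_le
      _ ≤ ∑ _i ∈ T, (s-1) := by
          apply Finset.sum_le_sum
          intro i hiT
          have hij : j ≠ i := fun hh => hjT (hh ▸ hiT)
          have := hint j i hij
          omega
      _ = k * (s-1) := by rw [Finset.sum_const, hT, smul_eq_mul]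
    have h2 : 2 * (D j ∩ T.biUnion D).card < d := by
      calc 2 * (D j ∩ T.biUnion D).card ≤ 2 * (k * (s-1)) := by omega
      _ = 2*k*(s-1) := by ring
      _ < d := hd
    have hR : ((2 * (D j ∩ T.biUnion D).card : ℕ) : ℝ) < ((d : ℕ) : ℝ) := by exact_mod_cast h2
    push_cast at hR
    linarith

set_option maxHeartbeats 1600000 in
/-- There exists an `(n,m,d,k,1,1/2)`-list union-free binary matrix with
`O(k² log (n/k))` rows and constant column weight `d = O(k log (n/k))`. -/
theorem exists_listUF_matrix :
    ∃ C : ℝ, 0 < C ∧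
      ∀ n k : ℕ, 0 < k → k + 1 ≤ n →
        ∃ (m d : ℕ) (A : Fin m → Fin n → Bool),
          ListUF n m d k 1 (1 / 2) A ∧
          (m : ℝ) ≤ C * (k : ℝ) ^ 2 * Real.log ((n : ℝ) / k) ∧
          (d : ℝ) ≤ C * k * Real.log ((n : ℝ) / k) := by
  refine ⟨300, by norm_num, ?_⟩
  intro n k hk hkn
  have hk1 : (1:ℝ) ≤ (k:ℝ) := by exact_mod_cast hk
  have hn1 : (1:ℝ) ≤ (n:ℝ) := by
    have : 1 ≤ n := by omega
    exact_mod_cast this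
  have hkR : (0:ℝ) < (k:ℝ) := by linarith
  have hnR : (0:ℝ) < (n:ℝ) := by linarith
  by_cases hcase : n ≤ k*k
  · -- small n: identity-like construction, d = 1, m = n
    have hkn' : k ≤ n := by omega
    obtain ⟨p, hp, hp1⟩ : ∃ p, n = k + p ∧ 1 ≤ p := ⟨n - k, by omega, by omega⟩
    have hA : n*n ≤ 300*(k*k)*p := by
      rcases le_or_gt n (2*k) with h | h
      · nlinarith
      · nlinarith
    have hB : n ≤ 2*(k*p) := by
      rcases le_or_gt n (2*k) with h | h
      · nlinarith
      · nlinarith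
    have hpcast : ((p:ℕ):ℝ) = (n:ℝ) - k := by
      have : (n:ℝ) = (k:ℝ) + p := by exact_mod_cast congrArg (Nat.cast : ℕ → ℝ) hp
      linarith
    have hlog : 1 - (k:ℝ)/n ≤ Real.log ((n:ℝ)/k) := by
      have hpos : (0:ℝ) < (k:ℝ)/n := by positivity
      have hle := Real.log_le_sub_one_of_pos hpos
      have hrw : Real.log ((k:ℝ)/n) = - Real.log ((n:ℝ)/k) := by
        rw [← Real.log_inv]; congr 1; field_simp
      rw [hrw] at hle; linarith
    have hfrac : 1 - (k:ℝ)/n = ((n:ℝ) - k)/n := by field_simp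
    refine ⟨n, 1, (fun i j => decide (i ∈ ({j} : Finset (Fin n)))), ?_, ?_, ?_⟩
    · apply listUF_of_family hk one_pos (by norm_num) (fun j => ({j} : Finset (Fin n)))
        (fun j => Finset.card_singleton j)
      intro i j hij
      have hinter : ({i} ∩ {j} : Finset (Fin n)) = ∅ := by
        apply Finset.singleton_inter_of_notMem
        simpa using hij
      rw [hinter]; simp
    · -- row bound
      have hAR : (n:ℝ)*(n:ℝ) ≤ 300*(k:ℝ)^2*((n:ℝ)-k) := by
        have hc : ((n*n : ℕ):ℝ) ≤ ((300*(k*k)*p : ℕ):ℝ) := by exact_mod_cast hA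
        push_cast at hc
        rw [hpcast] at hc
        nlinarith
      have key : (n:ℝ) ≤ 300*(k:ℝ)^2*(((n:ℝ)-k)/n) := by
        have e : 300*(k:ℝ)^2*(((n:ℝ)-k)/n) = (300*(k:ℝ)^2*((n:ℝ)-k))/n := by ring
        rw [e, le_div_iff₀ hnR]
        nlinarith
      calc (n:ℝ) ≤ 300*(k:ℝ)^2*(((n:ℝ)-k)/n) := key
      _ ≤ 300*(k:ℝ)^2*Real.log ((n:ℝ)/k) := by
          apply mul_le_mul_of_nonneg_left _ (by positivity)
          rw [← hfrac]; exact hlog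
    · -- weight bound
      have hBR : (n:ℝ) ≤ 2*((k:ℝ)*((n:ℝ)-k)) := by
        have hc : ((n:ℕ):ℝ) ≤ ((2*(k*p) : ℕ):ℝ) := by exact_mod_cast hB
        push_cast at hc
        rw [hpcast] at hc
        nlinarith
      have h1 : (1:ℝ)/2 ≤ (k:ℝ)*(((n:ℝ)-k)/n) := by
        have e : (k:ℝ)*(((n:ℝ)-k)/n) = ((k:ℝ)*((n:ℝ)-k))/n := by ring
        rw [e, le_div_iff₀ hnR]
        nlinarith
      have h2 : (1:ℝ)/2 ≤ (k:ℝ)*Real.log ((n:ℝ)/k) := by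
        calc (1:ℝ)/2 ≤ (k:ℝ)*(((n:ℝ)-k)/n) := h1
        _ ≤ (k:ℝ)*Real.log ((n:ℝ)/k) := by
            apply mul_le_mul_of_nonneg_left _ (by positivity)
            rw [← hfrac]; exact hlog
      push_cast
      linarith
  · -- large n: random-like construction via counting
    push_neg at hcase
    set s := Nat.clog 2 n with hsdef
    have hn2 : 2 ≤ n := by nlinarith
    have hs1 : 1 ≤ s := Nat.clog_pos one_lt_two hn2
    have hnpow : n ≤ 2^s := Nat.le_pow_clog one_lt_two n
    obtain ⟨D, hcard, hint⟩ :=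
      exists_family (48*k^2*s) (2*k*s) s n (master k s n hk hs1 hnpow)
    have hd : 2*k*(s-1) < 2*k*s := by
      have hss : s - 1 < s := by omega
      have h2k : (0:ℕ) < 2*k := by omega
      exact mul_lt_mul_of_pos_left hss h2k
    have hs1R : (1:ℝ) ≤ (s:ℝ) := by exact_mod_cast hs1
    -- log bounds
    have hlogn : ((s:ℝ)-1) * Real.log 2 < Real.log n := by
      have hnat : 2^(s-1) < n := Nat.pow_pred_clog_lt_self one_lt_two (by omega)
      have hcast : (2:ℝ)^(s-1 : ℕ) < (n:ℝ) := by exact_mod_cast hnat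
      have hll := Real.log_lt_log (by positivity) hcast
      rw [Real.log_pow] at hll
      have hcs : ((s-1:ℕ):ℝ) = (s:ℝ)-1 := by
        push_cast [Nat.cast_sub hs1]; ring
      rwa [hcs] at hll
    have hlog2 : (2:ℝ)/3 ≤ Real.log 2 := by
      have := Real.log_two_gt_d9; linarith
    have hlogn2 : Real.log 2 ≤ Real.log n := by
      apply Real.log_le_log (by norm_num)
      exact_mod_cast hn2
    have hsbound : (s:ℝ) ≤ 3 * Real.log n := by
      have hmul : (s:ℝ) * ((2:ℝ)/3) ≤ (s:ℝ) * Real.log 2 :=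
        mul_le_mul_of_nonneg_left hlog2 (by positivity)
      have hlogn' := hlogn
      rw [sub_mul, one_mul] at hlogn'
      linarith
    have hLdef : Real.log ((n:ℝ)/k) = Real.log n - Real.log k :=
      Real.log_div (ne_of_gt hnR) (ne_of_gt hkR)
    have hk2n : (k:ℝ)*k ≤ (n:ℝ) := by exact_mod_cast le_of_lt hcase
    have h2logk : Real.log k + Real.log k ≤ Real.log n := by
      have hll : Real.log ((k:ℝ)*k) ≤ Real.log n := Real.log_le_log (by positivity) hk2n
      rwa [Real.log_mul (ne_of_gt hkR) (ne_of_gt hkR)] at hll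
    have hlogkn : Real.log n ≤ 2 * Real.log ((n:ℝ)/k) := by
      rw [hLdef]
      have hlogk0 : 0 ≤ Real.log k := Real.log_nonneg hk1
      linarith
    have hsL : (s:ℝ) ≤ 6 * Real.log ((n:ℝ)/k) := by linarith
    have hL0 : 0 ≤ Real.log ((n:ℝ)/k) := by
      apply Real.log_nonneg
      rw [le_div_iff₀ hkR]
      nlinarith
    refine ⟨48*k^2*s, 2*k*s, _, listUF_of_family hk hs1 hd D hcard hint, ?_, ?_⟩
    · have hgoal : (48:ℝ)*(k:ℝ)^2*(s:ℝ) ≤ 300*(k:ℝ)^2*Real.log ((n:ℝ)/k) := by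
        calc (48:ℝ)*(k:ℝ)^2*(s:ℝ)
            ≤ 48*(k:ℝ)^2*(6*Real.log ((n:ℝ)/k)) := by
              apply mul_le_mul_of_nonneg_left hsL (by positivity)
        _ ≤ 300*(k:ℝ)^2*Real.log ((n:ℝ)/k) := by nlinarith [sq_nonneg (k:ℝ)]
      exact_mod_cast hgoal
    · have hgoal : (2:ℝ)*(k:ℝ)*(s:ℝ) ≤ 300*(k:ℝ)*Real.log ((n:ℝ)/k) := by
        calc (2:ℝ)*(k:ℝ)*(s:ℝ)
            ≤ 2*(k:ℝ)*(6*Real.log ((n:ℝ)/k)) := by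
              apply mul_le_mul_of_nonneg_left hsL (by positivity)
        _ ≤ 300*(k:ℝ)*Real.log ((n:ℝ)/k) := by nlinarith
      exact_mod_cast hgoal
end

section
/- Let n ≥ 2, L := ⌈log₂ n⌉, and let U ∈ {0,1}^{2L×n} be the signature matrix. Then for any set J ⊆ [n] with |J| ≥ 2, the entrywise union (logical OR) of the columns {U_j : j ∈ J} has Hamming weight strictly greater than L; consequently, a vector in {0,1}^{2L} of Hamming weight exactly L that arises as the union of a nonempty set of columns of U must be a single column of U. -/
open scoped Classical

/-- The signature matrix `U ∈ {0,1}^{2L × n}` with `L = ⌈log₂ n⌉`: the column indexed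
by `j : Fin n` is the vertical concatenation of the `L`-bit binary representation of
the integer `j` (i.e. of `j - 1` when columns are indexed `1,…,n`) and its bit-wise
complement. -/
def sigMatrix (n : ℕ) : Fin (2 * Nat.clog 2 n) → Fin n → Bool :=
  fun i j =>
    if (i : ℕ) < Nat.clog 2 n then (j : ℕ).testBit (i : ℕ)
    else !((j : ℕ).testBit ((i : ℕ) - Nat.clog 2 n))

/-- The entrywise union (logical OR) of any at least two columns of the signature
matrix has Hamming weight strictly greater than `L = ⌈log₂ n⌉`; consequently a union
of a nonempty set of columns having Hamming weight exactly `L` must come from a single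
column. -/
theorem sigMatrix_union_weight (n : ℕ) (hn : 2 ≤ n) :
    (∀ J : Finset (Fin n), 2 ≤ J.card →
      Nat.clog 2 n <
        (Finset.univ.filter fun i => ∃ j ∈ J, sigMatrix n i j = true).card) ∧
    (∀ J : Finset (Fin n), J.Nonempty →
      (Finset.univ.filter fun i => ∃ j ∈ J, sigMatrix n i j = true).card = Nat.clog 2 n →
      ∃ j₀ ∈ J, J = {j₀} ∧
        ∀ i, (∃ j ∈ J, sigMatrix n i j = true) ↔ sigMatrix n i j₀ = true) := by
  set L := Nat.clog 2 n with hL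
  have hpow : ∀ j : Fin n, (j : ℕ) < 2 ^ L :=
    fun j => lt_of_lt_of_le j.isLt (Nat.le_pow_clog (by norm_num) n)
  have main : ∀ J : Finset (Fin n), 2 ≤ J.card →
      L < (Finset.univ.filter fun i => ∃ j ∈ J, sigMatrix n i j = true).card := by
    intro J hJ
    obtain ⟨j₁, hj₁, j₂, hj₂, hne⟩ := Finset.one_lt_card.mp hJ
    -- a bit where j₁ and j₂ differ
    have hvne : (j₁ : ℕ) ≠ (j₂ : ℕ) := fun h => hne (Fin.ext h)
    have hex : ∃ k, (j₁ : ℕ).testBit k ≠ (j₂ : ℕ).testBit k := by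
      by_contra h
      push_neg at h
      exact hvne (Nat.eq_of_testBit_eq h)
    obtain ⟨k₀, hk₀⟩ := hex
    have hk₀L : k₀ < L := by
      by_contra h
      push_neg at h
      have h1 : (j₁ : ℕ).testBit k₀ = false :=
        Nat.testBit_lt_two_pow (lt_of_lt_of_le (hpow j₁) (Nat.pow_le_pow_right (by norm_num) h))
      have h2 : (j₂ : ℕ).testBit k₀ = false :=
        Nat.testBit_lt_two_pow (lt_of_lt_of_le (hpow j₂) (Nat.pow_le_pow_right (by norm_num) h))
      exact hk₀ (h1.trans h2.symm)
    set S : Finset (Fin (2 * L)) :=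
      Finset.univ.filter (fun i => ∃ j ∈ J, sigMatrix n i j = true) with hS
    -- the injection from Fin L into S using column j₁
    set g : Fin L → Fin (2 * L) := fun k =>
      if (j₁ : ℕ).testBit k then ⟨k, by omega⟩ else ⟨(k : ℕ) + L, by omega⟩ with hg
    have hgval : ∀ k : Fin L, (g k : ℕ) = if (j₁ : ℕ).testBit k then (k : ℕ) else (k : ℕ) + L := by
      intro k
      rw [hg]; simp only []
      split <;> rfl
    have hginj : Function.Injective g := by
      intro k₁ k₂ h
      have h' : (g k₁ : ℕ) = (g k₂ : ℕ) := congrArg Fin.val h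
      rw [hgval, hgval] at h'
      have hb1 : (k₁ : ℕ) < L := k₁.isLt
      have hb2 : (k₂ : ℕ) < L := k₂.isLt
      apply Fin.ext
      split at h' <;> split at h' <;> omega
    have hgmem : ∀ k : Fin L, g k ∈ S := by
      intro k
      rw [hS, Finset.mem_filter]
      refine ⟨Finset.mem_univ _, j₁, hj₁, ?_⟩
      unfold sigMatrix
      rw [hgval]
      by_cases hb : (j₁ : ℕ).testBit k
      · simp [← hL, hb, k.isLt]
      · have : ¬ ((k : ℕ) + L < L) := by omega
        simp [← hL, hb, this]
    -- the extra element witnessed by j₂ at the differing bit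
    set h : Fin (2 * L) :=
      if (j₁ : ℕ).testBit k₀ then ⟨k₀ + L, by omega⟩ else ⟨k₀, by omega⟩ with hh
    have hhval : (h : ℕ) = if (j₁ : ℕ).testBit k₀ then k₀ + L else k₀ := by
      rw [hh]; split <;> rfl
    have hhmem : h ∈ S := by
      rw [hS, Finset.mem_filter]
      refine ⟨Finset.mem_univ _, j₂, hj₂, ?_⟩
      unfold sigMatrix
      rw [hhval]
      by_cases hb : (j₁ : ℕ).testBit k₀
      · have hb2 : (j₂ : ℕ).testBit k₀ = false := by
          cases hb2 : (j₂ : ℕ).testBit k₀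
          · rfl
          · exact absurd (hb.trans hb2.symm) hk₀
        have : ¬ (k₀ + L < L) := by omega
        simp [← hL, hb, this, hb2]
      · have hb2 : (j₂ : ℕ).testBit k₀ = true := by
          cases hb2 : (j₂ : ℕ).testBit k₀
          · simp only [Bool.not_eq_true] at hb
            exact absurd (hb.trans hb2.symm) hk₀
          · rfl
        simp [← hL, hb, hk₀L, hb2]
    have hhnot : h ∉ Finset.image g Finset.univ := by
      intro hmem
      obtain ⟨k, _, hk⟩ := Finset.mem_image.mp hmem
      have h' : (g k : ℕ) = (h : ℕ) := congrArg Fin.val hk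
      rw [hgval, hhval] at h'
      have hb1 : (k : ℕ) < L := k.isLt
      -- case analysis
      by_cases hbk : (j₁ : ℕ).testBit k <;> by_cases hbk₀ : (j₁ : ℕ).testBit k₀ <;>
        simp [hbk, hbk₀] at h' <;> try omega
      · have : (k : ℕ) = k₀ := by omega
        rw [this] at hbk; exact hbk₀ hbk
      · have : (k : ℕ) = k₀ := by omega
        rw [this] at hbk; exact hbk hbk₀
    have hsub : insert h (Finset.image g Finset.univ) ⊆ S := by
      intro x hx
      rcases Finset.mem_insert.mp hx with rfl | hx
      · exact hhmem
      · obtain ⟨k, _, rfl⟩ := Finset.mem_image.mp hx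
        exact hgmem k
    have hcard : (insert h (Finset.image g Finset.univ)).card = L + 1 := by
      rw [Finset.card_insert_of_notMem hhnot,
        Finset.card_image_of_injective _ hginj, Finset.card_univ, Fintype.card_fin]
    have := Finset.card_le_card hsub
    omega
  refine ⟨main, ?_⟩
  intro J hJne hcard
  have hJ1 : J.card = 1 := by
    have h1 : 1 ≤ J.card := Finset.card_pos.mpr hJne
    by_contra h
    have h2 : 2 ≤ J.card := by omega
    have := main J h2
    omega
  obtain ⟨j₀, hj₀⟩ := Finset.card_eq_one.mp hJ1
  refine ⟨j₀, by rw [hj₀]; exact Finset.mem_singleton_self _, hj₀, ?_⟩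
  intro i
  constructor
  · rintro ⟨j, hj, hval⟩
    rw [hj₀, Finset.mem_singleton] at hj
    rwa [hj] at hval
  · intro hval
    exact ⟨j₀, by rw [hj₀]; exact Finset.mem_singleton_self _, hval⟩
end

section
/- Fix α > 1 and δ > 0, and set k_α := α·log(16k)/log log(16k). There exists k₀ such that for all n ≥ 2 and all k ≥ k₀ the following holds: consider L := ⌈log₂ n⌉ independent levels, where at each level k balls are thrown into 16k bins, each ball independently and uniformly at random. Then the probability that at some level some bin receives more than k_α balls is at most ⌈log₂ n⌉ · (16k)^{1−α+δ}. -/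
open scoped Classical

open Finset Filter

/-- The number of balls landing in bin `b` at level `ℓ` when the balls are placed
according to `ω : Fin L → Fin k → Fin (16 * k)`. -/
def binLoad {L k : ℕ} (ω : Fin L → Fin k → Fin (16 * k)) (ℓ : Fin L)
    (b : Fin (16 * k)) : ℕ :=
  (Finset.univ.filter fun i => ω ℓ i = b).card

lemma aux_count (L k N : ℕ) (ℓ : Fin L) (b : Fin N) (S : Finset (Fin k)) :
    (Finset.univ.filter fun ω : Fin L → Fin k → Fin N => ∀ i ∈ S, ω ℓ i = b).card
      = N ^ (k - S.card) * (N ^ k) ^ (L - 1) := by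
  rw [← Fintype.card_subtype]
  have e : {ω : Fin L → Fin k → Fin N // ∀ i ∈ S, ω ℓ i = b}
      ≃ ((↥(Sᶜ : Finset (Fin k)) → Fin N) × ({j : Fin L // j ≠ ℓ} → Fin k → Fin N)) :=
  { toFun := fun ω => (fun i => ω.1 ℓ i, fun j => ω.1 j)
    invFun := fun p =>
      ⟨fun j => if hj : j = ℓ then
          (fun i => if hi : i ∈ S then b else p.1 ⟨i, Finset.mem_compl.mpr hi⟩)
        else p.2 ⟨j, hj⟩, by
        intro i hi
        simp [dif_pos rfl, hi]⟩
    left_inv := fun ω => by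
      ext j i
      by_cases hj : j = ℓ
      · subst hj
        by_cases hi : i ∈ S
        · simp [hi, ω.2 i hi]
        · simp [hi]
      · simp [hj]
    right_inv := fun p => by
      refine Prod.ext ?_ ?_
      · funext i
        have hi : (i : Fin k) ∉ S := Finset.mem_compl.mp i.2
        simp [hi]
      · funext j
        have hj : (j : Fin L) ≠ ℓ := j.2
        simp [hj] }
  have hcompl : Fintype.card {j : Fin L // j ≠ ℓ} = L - 1 := by
    rw [Fintype.card_subtype_compl, Fintype.card_subtype_eq, Fintype.card_fin]
  rw [Fintype.card_congr e, Fintype.card_prod, Fintype.card_fun, Fintype.card_fun,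
    Fintype.card_fun, Fintype.card_coe, Finset.card_compl, Fintype.card_fin, Fintype.card_fin,
    hcompl]

lemma count_bound (L k m : ℕ) :
    (Finset.univ.filter fun ω : Fin L → Fin k → Fin (16 * k) =>
        ∃ ℓ b, m ≤ binLoad ω ℓ b).card
      ≤ L * ((16 * k) * (Nat.choose k m *
          ((16 * k) ^ (k - m) * ((16 * k) ^ k) ^ (L - 1)))) := by
  classical
  have hsub : (Finset.univ.filter fun ω : Fin L → Fin k → Fin (16 * k) =>
        ∃ ℓ b, m ≤ binLoad ω ℓ b)
      ⊆ Finset.univ.biUnion (fun ℓ : Fin L =>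
          Finset.univ.biUnion (fun b : Fin (16 * k) =>
            (Finset.powersetCard m (Finset.univ : Finset (Fin k))).biUnion (fun S =>
              Finset.univ.filter fun ω : Fin L → Fin k → Fin (16 * k) =>
                ∀ i ∈ S, ω ℓ i = b))) := by
    intro ω hω
    simp only [mem_filter, mem_univ, true_and] at hω
    obtain ⟨ℓ, b, hm⟩ := hω
    obtain ⟨S, hS, hScard⟩ := Finset.exists_subset_card_eq hm
    simp only [Finset.mem_biUnion, mem_univ, true_and]
    refine ⟨ℓ, b, S, ?_, ?_⟩
    · simp [Finset.mem_powersetCard, hScard]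
    · simp only [mem_filter, mem_univ, true_and]
      intro i hi
      have := hS hi
      simpa using (Finset.mem_filter.mp this).2
  refine le_trans (Finset.card_le_card hsub) ?_
  have h3 : ∀ (ℓ : Fin L) (b : Fin (16 * k)) (S : Finset (Fin k)),
      S ∈ Finset.powersetCard m (Finset.univ : Finset (Fin k)) →
      (Finset.univ.filter fun ω : Fin L → Fin k → Fin (16 * k) =>
          ∀ i ∈ S, ω ℓ i = b).card
        ≤ (16 * k) ^ (k - m) * ((16 * k) ^ k) ^ (L - 1) := by
    intro ℓ b S hS
    have hScard : S.card = m := (Finset.mem_powersetCard.mp hS).2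
    rw [aux_count L k (16 * k) ℓ b S, hScard]
  have h2 : ∀ (ℓ : Fin L) (b : Fin (16 * k)),
      ((Finset.powersetCard m (Finset.univ : Finset (Fin k))).biUnion (fun S =>
        Finset.univ.filter fun ω : Fin L → Fin k → Fin (16 * k) =>
          ∀ i ∈ S, ω ℓ i = b)).card
      ≤ Nat.choose k m * ((16 * k) ^ (k - m) * ((16 * k) ^ k) ^ (L - 1)) := by
    intro ℓ b
    refine (Finset.card_biUnion_le_card_mul _ _ _ (h3 ℓ b)).trans ?_
    rw [Finset.card_powersetCard, Finset.card_univ, Fintype.card_fin]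
  have h1 : ∀ ℓ : Fin L,
      ((Finset.univ : Finset (Fin (16 * k))).biUnion (fun b =>
        (Finset.powersetCard m (Finset.univ : Finset (Fin k))).biUnion (fun S =>
          Finset.univ.filter fun ω : Fin L → Fin k → Fin (16 * k) =>
            ∀ i ∈ S, ω ℓ i = b))).card
      ≤ (16 * k) * (Nat.choose k m * ((16 * k) ^ (k - m) * ((16 * k) ^ k) ^ (L - 1))) := by
    intro ℓ
    refine (Finset.card_biUnion_le_card_mul _ _ _ (fun b _ => h2 ℓ b)).trans ?_
    rw [Finset.card_univ, Fintype.card_fin]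
  refine (Finset.card_biUnion_le_card_mul _ _ _ (fun ℓ _ => h1 ℓ)).trans ?_
  rw [Finset.card_univ, Fintype.card_fin]

lemma factorial_ge (α δ : ℝ) (hα : 0 < α) (hδ : 0 < δ) (N : ℝ) (hN : 1 < N)
    (ht1 : 1 ≤ Real.log (Real.log N))
    (ht3 : α * (Real.log (Real.log (Real.log N)) + 1 - Real.log α)
        ≤ δ * Real.log (Real.log N))
    (m : ℕ)
    (hkαe : Real.exp 1 ≤ α * Real.log N / Real.log (Real.log N))
    (hm : α * Real.log N / Real.log (Real.log N) ≤ (m : ℝ)) :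
    N ^ (α - δ) ≤ (Nat.factorial m : ℝ) := by
  set x := Real.log N with hxdef
  set t := Real.log x with htdef
  have hx : 0 < x := Real.log_pos hN
  have ht0 : 0 < t := lt_of_lt_of_le one_pos ht1
  set kα := α * x / t with hkαdef
  have hkαpos : 0 < kα := lt_of_lt_of_le (Real.exp_pos 1) hkαe
  have hmpos : (0 : ℝ) < (m : ℝ) := lt_of_lt_of_le hkαpos hm
  rcases le_or_gt (α - δ) 0 with hcase | hcase
  · calc N ^ (α - δ) ≤ N ^ (0 : ℝ) :=
          Real.rpow_le_rpow_of_exponent_le hN.le hcase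
    _ = 1 := Real.rpow_zero N
    _ ≤ (Nat.factorial m : ℝ) := by
          exact_mod_cast Nat.one_le_iff_ne_zero.mpr (Nat.factorial_ne_zero m)
  · -- main case
    have hlogkα : Real.log kα = Real.log α + t - Real.log t := by
      rw [hkαdef, Real.log_div (by positivity) (ne_of_gt ht0), Real.log_mul (ne_of_gt hα) (ne_of_gt hx)]
    have h1logkα : 1 ≤ Real.log kα := by
      calc (1 : ℝ) = Real.log (Real.exp 1) := (Real.log_exp 1).symm
      _ ≤ Real.log kα := Real.log_le_log (Real.exp_pos 1) hkαe
    have hexpand : kα * (Real.log kα - 1)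
        = α * x - x * (α * (Real.log t + 1 - Real.log α)) / t := by
      rw [hlogkα, hkαdef]
      field_simp
      ring
    have hstep : x * (α * (Real.log t + 1 - Real.log α)) / t ≤ x * (δ * t) / t := by
      gcongr
    have hdx : x * (δ * t) / t = δ * x := by field_simp
    have hkey1 : (α - δ) * x ≤ kα * (Real.log kα - 1) := by
      rw [hexpand]
      rw [hdx] at hstep
      linarith
    have hkey2 : kα * (Real.log kα - 1) ≤ (m : ℝ) * (Real.log m - 1) := by
      have hlog : Real.log kα ≤ Real.log m := Real.log_le_log hkαpos hm
      have := mul_le_mul hm (sub_le_sub_right hlog 1) (by linarith) (le_of_lt hmpos)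
      linarith
    have hkey : x * (α - δ) ≤ (m : ℝ) * Real.log m - m := by nlinarith [hkey1, hkey2]
    have hm1 : 1 ≤ m := by exact_mod_cast Nat.one_le_cast.mpr (by exact_mod_cast Nat.pos_of_ne_zero (by
      intro h; rw [h] at hmpos; simp at hmpos))
    calc N ^ (α - δ) = Real.exp (x * (α - δ)) := Real.rpow_def_of_pos (by linarith) _
    _ ≤ Real.exp ((m : ℝ) * Real.log m - m) := Real.exp_le_exp.mpr hkey
    _ = (m : ℝ) ^ m / Real.exp m := by
        rw [Real.exp_sub, Real.exp_nat_mul, Real.exp_log hmpos]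
    _ ≤ (Nat.factorial m : ℝ) := by
        have h := Real.pow_div_factorial_le_exp (x := (m : ℝ)) (le_of_lt hmpos) m
        have hfpos : (0 : ℝ) < (Nat.factorial m : ℝ) := by exact_mod_cast Nat.factorial_pos m
        rw [div_le_iff₀ hfpos] at h
        rw [div_le_iff₀ (Real.exp_pos _)]
        linarith [h]

section evts
variable (α δ : ℝ)

lemma evts (hα : 1 < α) (hδ : 0 < δ) :
    ∀ᶠ k : ℕ in atTop, 1 ≤ k ∧
      1 ≤ Real.log (Real.log (16 * (k : ℝ))) ∧
      Real.exp 1 ≤ α * Real.log (16 * (k : ℝ)) / Real.log (Real.log (16 * (k : ℝ))) ∧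
      α * (Real.log (Real.log (Real.log (16 * (k : ℝ)))) + 1 - Real.log α)
        ≤ δ * Real.log (Real.log (16 * (k : ℝ))) := by
  have hα0 : (0 : ℝ) < α := by linarith
  have hxt : Tendsto (fun k : ℕ => Real.log (16 * (k : ℝ))) atTop atTop :=
    Real.tendsto_log_atTop.comp
      ((tendsto_natCast_atTop_atTop).const_mul_atTop (by norm_num : (0:ℝ) < 16))
  have ht : Tendsto (fun k : ℕ => Real.log (Real.log (16 * (k : ℝ)))) atTop atTop :=
    Real.tendsto_log_atTop.comp hxt
  have hE1 : ∀ᶠ k : ℕ in atTop, 1 ≤ Real.log (Real.log (16 * (k : ℝ))) :=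
    ht.eventually_ge_atTop 1
  have hxpos : ∀ᶠ k : ℕ in atTop, 0 < Real.log (16 * (k : ℝ)) :=
    hxt.eventually_gt_atTop 0
  have hE2 : ∀ᶠ k : ℕ in atTop,
      Real.exp 1 ≤ α * Real.log (16 * (k : ℝ)) / Real.log (Real.log (16 * (k : ℝ))) := by
    have hdiv : Tendsto (fun k : ℕ =>
        Real.log (16 * (k : ℝ)) / Real.log (Real.log (16 * (k : ℝ)))) atTop atTop := by
      have h := (Real.tendsto_exp_div_pow_atTop 1).comp ht
      refine h.congr' ?_
      filter_upwards [hxpos] with k hk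
      simp [Function.comp, Real.exp_log hk]
    have h2 := hdiv.const_mul_atTop hα0
    filter_upwards [h2.eventually_ge_atTop (Real.exp 1)] with k hk
    rw [mul_div_assoc]
    exact hk
  have hE3 : ∀ᶠ k : ℕ in atTop,
      α * (Real.log (Real.log (Real.log (16 * (k : ℝ)))) + 1 - Real.log α)
        ≤ δ * Real.log (Real.log (16 * (k : ℝ))) := by
    have hg : Tendsto (fun s : ℝ => (Real.log s + (1 - Real.log α)) / s) atTop (nhds 0) := by
      have h1 : Tendsto (fun s : ℝ => Real.log s / s) atTop (nhds 0) := by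
        simpa using Real.isLittleO_log_id_atTop.tendsto_div_nhds_zero
      have h2 : Tendsto (fun s : ℝ => (1 - Real.log α) / s) atTop (nhds 0) :=
        tendsto_const_nhds.div_atTop tendsto_id
      have h3 := h1.add h2
      simp only [add_zero] at h3
      refine h3.congr (fun s => ?_)
      rw [← add_div]
    have hcomp := hg.comp ht
    have hlt := hcomp.eventually (gt_mem_nhds (show (0:ℝ) < δ / α by positivity))
    filter_upwards [hlt, hE1] with k hk h1k
    simp only [Function.comp] at hk
    have htk : (0:ℝ) < Real.log (Real.log (16 * (k : ℝ))) := lt_of_lt_of_le one_pos h1k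
    rw [div_lt_div_iff₀ htk hα0] at hk
    nlinarith
  filter_upwards [eventually_ge_atTop 1, hE1, hE2, hE3] with k h1 h2 h3 h4
  exact ⟨h1, h2, h3, h4⟩

end evts

/-- Balls into bins over `⌈log₂ n⌉` independent levels: fix `α > 1` and `δ > 0`, and
set `k_α := α · log(16k) / log log(16k)`.  For all sufficiently large `k` and all
`n ≥ 2`, if at each of `⌈log₂ n⌉` independent levels `k` balls are thrown
independently and uniformly at random into `16k` bins, then the probability
(computed as a ratio of counts over the finite uniform sample space) that at some
level some bin receives more than `k_α` balls is at most
`⌈log₂ n⌉ · (16k)^(1 - α + δ)`. -/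
theorem ballsIntoBins_levels_max_load (α δ : ℝ) (hα : 1 < α) (hδ : 0 < δ) :
    ∃ k₀ : ℕ, ∀ n k : ℕ, 2 ≤ n → k₀ ≤ k →
      ((Finset.univ.filter fun ω : Fin (Nat.clog 2 n) → Fin k → Fin (16 * k) =>
          ∃ ℓ : Fin (Nat.clog 2 n), ∃ b : Fin (16 * k),
            α * Real.log (16 * k) / Real.log (Real.log (16 * k)) <
              (binLoad ω ℓ b : ℝ)).card : ℝ) /
        (Fintype.card (Fin (Nat.clog 2 n) → Fin k → Fin (16 * k)) : ℝ)
      ≤ (Nat.clog 2 n : ℝ) * (16 * (k : ℝ)) ^ (1 - α + δ) := by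
  obtain ⟨k₀, hk₀⟩ := eventually_atTop.mp (evts α δ hα hδ)
  refine ⟨k₀, ?_⟩
  intro n k hn hk
  obtain ⟨hk1, ht1, hkαe, ht3⟩ := hk₀ k hk
  set L := Nat.clog 2 n with hLdef
  have hL : 0 < L := Nat.clog_pos one_lt_two hn
  set R : ℝ := 16 * (k : ℝ) with hRdef
  have hR : 1 < R := by
    have : (1:ℝ) ≤ (k:ℝ) := by exact_mod_cast hk1
    rw [hRdef]; nlinarith
  have hR0 : 0 < R := lt_trans one_pos hR
  set kα : ℝ := α * Real.log (16 * (k:ℝ)) / Real.log (Real.log (16 * (k:ℝ))) with hkαdef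
  have hkαpos : 0 < kα := lt_of_lt_of_le (Real.exp_pos 1) hkαe
  set m : ℕ := Nat.floor kα + 1 with hmdef
  have hkαm : kα ≤ (m : ℝ) := by
    have := Nat.lt_floor_add_one kα
    rw [hmdef]
    push_cast
    linarith
  -- the event with the real threshold is contained in the event with threshold m
  have hsub2 : (Finset.univ.filter fun ω : Fin L → Fin k → Fin (16 * k) =>
        ∃ ℓ : Fin L, ∃ b : Fin (16 * k), kα < (binLoad ω ℓ b : ℝ))
      ⊆ (Finset.univ.filter fun ω : Fin L → Fin k → Fin (16 * k) =>
        ∃ ℓ b, m ≤ binLoad ω ℓ b) := by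
    intro ω hω
    simp only [mem_filter, mem_univ, true_and] at hω ⊢
    obtain ⟨ℓ, b, hlt⟩ := hω
    exact ⟨ℓ, b, (Nat.floor_lt hkαpos.le).mpr hlt⟩
  have hcard : (Fintype.card (Fin L → Fin k → Fin (16 * k))) = ((16 * k) ^ k) ^ L := by
    simp [Fintype.card_fun, Fintype.card_fin]
  have hload_le : ∀ (ω : Fin L → Fin k → Fin (16 * k)) ℓ b, binLoad ω ℓ b ≤ k := by
    intro ω ℓ b
    calc binLoad ω ℓ b ≤ (Finset.univ : Finset (Fin k)).card := Finset.card_filter_le _ _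
    _ = k := by simp
  rcases lt_or_ge k m with hkm | hmk
  · -- event is empty
    have hempty : (Finset.univ.filter fun ω : Fin L → Fin k → Fin (16 * k) =>
        ∃ ℓ : Fin L, ∃ b : Fin (16 * k), kα < (binLoad ω ℓ b : ℝ)) = ∅ := by
      rw [Finset.filter_eq_empty_iff]
      intro ω _
      rintro ⟨ℓ, b, hlt⟩
      have h1 : m ≤ binLoad ω ℓ b := (Nat.floor_lt hkαpos.le).mpr hlt
      have h2 := hload_le ω ℓ b
      omega
    rw [hempty]
    simp only [Finset.card_empty, Nat.cast_zero, zero_div]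
    positivity
  · -- main case
    have hA : (Finset.univ.filter fun ω : Fin L → Fin k → Fin (16 * k) =>
        ∃ ℓ : Fin L, ∃ b : Fin (16 * k), kα < (binLoad ω ℓ b : ℝ)).card
        ≤ (L * ((16 * k) * Nat.choose k m)) *
          ((16 * k) ^ (k - m) * ((16 * k) ^ k) ^ (L - 1)) :=
      le_trans (Finset.card_le_card hsub2) ((count_bound L k m).trans_eq (by ring))
    have hid : (16 * k) ^ (k - m) * ((16 * k) ^ k) ^ (L - 1) * (16 * k) ^ m
        = ((16 * k) ^ k) ^ L := by
      have h1 : k - m + m = k := Nat.sub_add_cancel hmk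
      have h2 : L - 1 + 1 = L := Nat.sub_add_cancel hL
      calc (16 * k) ^ (k - m) * ((16 * k) ^ k) ^ (L - 1) * (16 * k) ^ m
          = (16 * k) ^ (k - m + m) * ((16 * k) ^ k) ^ (L - 1) := by ring
        _ = ((16 * k) ^ k) ^ (L - 1 + 1) := by rw [h1]; ring
        _ = ((16 * k) ^ k) ^ L := by rw [h2]
    have hAm : (Finset.univ.filter fun ω : Fin L → Fin k → Fin (16 * k) =>
        ∃ ℓ : Fin L, ∃ b : Fin (16 * k), kα < (binLoad ω ℓ b : ℝ)).card * (16 * k) ^ m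
        ≤ (L * ((16 * k) * Nat.choose k m)) * ((16 * k) ^ k) ^ L := by
      calc _ ≤ ((L * ((16 * k) * Nat.choose k m)) *
            ((16 * k) ^ (k - m) * ((16 * k) ^ k) ^ (L - 1))) * (16 * k) ^ m :=
          Nat.mul_le_mul_right _ hA
      _ = (L * ((16 * k) * Nat.choose k m)) *
            ((16 * k) ^ (k - m) * ((16 * k) ^ k) ^ (L - 1) * (16 * k) ^ m) := by ring
      _ = _ := by rw [hid]
    -- move to the reals
    have hRk : ((16 * k : ℕ) : ℝ) = R := by rw [hRdef]; push_cast; ring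
    have hAmR : ((Finset.univ.filter fun ω : Fin L → Fin k → Fin (16 * k) =>
        ∃ ℓ : Fin L, ∃ b : Fin (16 * k), kα < (binLoad ω ℓ b : ℝ)).card : ℝ) * R ^ m
        ≤ ((L : ℝ) * (R * (Nat.choose k m : ℝ))) * (R ^ k) ^ L := by
      have := hAm
      have h := (Nat.cast_le (α := ℝ)).mpr hAm
      push_cast at h
      rw [hRdef]
      push_cast
      convert h using 2 <;> ring
    have hDpos : (0:ℝ) < (R ^ k) ^ L := by positivity
    have hRmpos : (0:ℝ) < R ^ m := by positivity
    have hstep1 : ((Finset.univ.filter fun ω : Fin L → Fin k → Fin (16 * k) =>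
        ∃ ℓ : Fin L, ∃ b : Fin (16 * k), kα < (binLoad ω ℓ b : ℝ)).card : ℝ) / ((R ^ k) ^ L)
        ≤ ((L : ℝ) * (R * (Nat.choose k m : ℝ))) / R ^ m := by
      rw [div_le_div_iff₀ hDpos hRmpos]
      exact hAmR
    -- bound the single-term ratio
    have hfact : R ^ (α - δ) ≤ (Nat.factorial m : ℝ) :=
      factorial_ge α δ (by linarith) hδ R hR ht1 ht3 m hkαe (le_trans (le_of_eq rfl) hkαm)
    have hfpos : (0:ℝ) < (Nat.factorial m : ℝ) := by exact_mod_cast Nat.factorial_pos m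
    have hchoose : (Nat.choose k m : ℝ) ≤ (k:ℝ) ^ m / (Nat.factorial m : ℝ) := by
      have := Nat.choose_le_pow_div (α := ℝ) m k
      push_cast at this ⊢
      exact this
    have hkR : (k:ℝ) ^ m ≤ R ^ m := by
      apply pow_le_pow_left₀ (by positivity)
      rw [hRdef]; nlinarith [Nat.cast_nonneg (α := ℝ) k]
    have hstep2 : R * (Nat.choose k m : ℝ) / R ^ m ≤ R / (Nat.factorial m : ℝ) := by
      calc R * (Nat.choose k m : ℝ) / R ^ m
          ≤ R * ((k:ℝ) ^ m / (Nat.factorial m : ℝ)) / R ^ m := by gcongr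
        _ = (R / (Nat.factorial m : ℝ)) * ((k:ℝ) ^ m / R ^ m) := by ring
        _ ≤ (R / (Nat.factorial m : ℝ)) * 1 := by
            apply mul_le_mul_of_nonneg_left _ (by positivity)
            rw [div_le_one hRmpos]
            exact hkR
        _ = R / (Nat.factorial m : ℝ) := by ring
    have hstep3 : R / (Nat.factorial m : ℝ) ≤ R ^ (1 - α + δ) := by
      have h1 : R / (Nat.factorial m : ℝ) ≤ R / R ^ (α - δ) := by gcongr
      have h2 : R / R ^ (α - δ) = R ^ (1 - α + δ) := by
        rw [show (1 - α + δ) = 1 + -(α - δ) by ring, Real.rpow_add hR0, Real.rpow_one,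
          Real.rpow_neg hR0.le, div_eq_mul_inv]
      linarith
    -- put everything together
    rw [hcard]
    push_cast
    have hgoalden : (((16 * (k:ℝ)) ^ k) ^ L) = (R ^ k) ^ L := by rw [hRdef]
    calc ((Finset.univ.filter fun ω : Fin L → Fin k → Fin (16 * k) =>
        ∃ ℓ : Fin L, ∃ b : Fin (16 * k), kα < (binLoad ω ℓ b : ℝ)).card : ℝ) / (((16 * (k:ℝ)) ^ k) ^ L)
        ≤ ((L : ℝ) * (R * (Nat.choose k m : ℝ))) / R ^ m := by rw [hgoalden]; exact hstep1
      _ = (L : ℝ) * (R * (Nat.choose k m : ℝ) / R ^ m) := by ring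
      _ ≤ (L : ℝ) * (R / (Nat.factorial m : ℝ)) := by
          apply mul_le_mul_of_nonneg_left hstep2 (by positivity)
      _ ≤ (L : ℝ) * R ^ (1 - α + δ) := by
          apply mul_le_mul_of_nonneg_left hstep3 (by positivity)
end

section
/- Let v ∈ {0,1}^n, let l be a positive integer, and let V ∈ ℝ^{l×n} be an AsTIM-l of v, i.e., V_{ij} ≠ 0 iff v_j = 1 and the submatrix of V on the columns indexed by supp(v) is totally invertible. Then for every x ∈ ℝ^n with 1 ≤ |supp(x) ∩ supp(v)| ≤ l, the vector Vx ∈ ℝ^l is nonzero. -/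
open scoped Classical

/-- A real matrix is totally invertible if every square submatrix (obtained by
selecting equally many rows and columns, without repetition) is invertible. -/
def TotallyInvertible {p q : Type*} (M : Matrix p q ℝ) : Prop :=
  ∀ (r : ℕ) (ρ : Fin r → p) (σ : Fin r → q),
    Function.Injective ρ → Function.Injective σ → (M.submatrix ρ σ).det ≠ 0

/-- If `V` is an AsTIM-`l` of the binary vector `v` (i.e. `V i j ≠ 0` iff `v j = 1`
and the submatrix of `V` on the columns of `supp(v)` is totally invertible), then for
every real vector `x` with `1 ≤ |supp(x) ∩ supp(v)| ≤ l`, the vector `V x` is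
nonzero. -/
theorem asTIM_no_accidental_zero (n l : ℕ) (hl : 0 < l)
    (v : Fin n → Bool) (V : Matrix (Fin l) (Fin n) ℝ)
    (hV : ∀ i j, V i j ≠ 0 ↔ v j = true)
    (hTI : TotallyInvertible
      (V.submatrix id (fun j : {j : Fin n // v j = true} => (j : Fin n))))
    (x : Fin n → ℝ)
    (h1 : 1 ≤ (Finset.univ.filter fun j => x j ≠ 0 ∧ v j = true).card)
    (h2 : (Finset.univ.filter fun j => x j ≠ 0 ∧ v j = true).card ≤ l) :
    V.mulVec x ≠ 0 := by
  intro hzero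
  set S := (Finset.univ.filter fun j => x j ≠ 0 ∧ v j = true) with hS
  set s := S.card with hs
  -- enumerate S
  let e : Fin s ≃ S := S.equivFin.symm
  have hmemS : ∀ j : Fin n, j ∈ S ↔ x j ≠ 0 ∧ v j = true := by
    intro j; simp [hS]
  let σ : Fin s → {j : Fin n // v j = true} :=
    fun k => ⟨(e k : Fin n), ((hmemS _).mp (e k).2).2⟩
  have hσ : Function.Injective σ := by
    intro a b hab
    have h := congrArg Subtype.val hab
    exact e.injective (Subtype.ext h)
  let ρ : Fin s → Fin l := Fin.castLE h2
  have hρ : Function.Injective ρ := Fin.castLE_injective h2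
  have hdet := hTI s ρ σ hρ hσ
  set M := ((V.submatrix id (fun j : {j : Fin n // v j = true} => (j : Fin n))).submatrix ρ σ) with hM
  let y : Fin s → ℝ := fun k => x (e k : Fin n)
  have hMy : M.mulVec y = 0 := by
    funext i
    have : M.mulVec y i = ∑ j ∈ S, V (ρ i) j * x j := by
      rw [Matrix.mulVec]
      simp only [dotProduct, hM, Matrix.submatrix_apply, id]
      calc (∑ k : Fin s, V (ρ i) ((e k : Fin n)) * x ((e k : Fin n)))
          = ∑ j : S, V (ρ i) (j : Fin n) * x (j : Fin n) :=
            Equiv.sum_comp e (fun j : S => V (ρ i) (j : Fin n) * x (j : Fin n))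
        _ = ∑ j ∈ S, V (ρ i) j * x j := Finset.sum_attach S (fun j => V (ρ i) j * x j)
    have h0 : V.mulVec x (ρ i) = 0 := congrFun hzero (ρ i)
    have hfull : ∑ j ∈ S, V (ρ i) j * x j = ∑ j : Fin n, V (ρ i) j * x j := by
      apply Finset.sum_subset (Finset.subset_univ S)
      intro j _ hj
      rw [hmemS] at hj
      push_neg at hj
      by_cases hx : x j = 0
      · simp [hx]
      · have : v j ≠ true := hj hx
        have : V (ρ i) j = 0 := by
          by_contra h; exact this ((hV _ _).mp h)
        simp [this]
    rw [this, hfull]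
    exact h0
  have hy0 : y = 0 := Matrix.eq_zero_of_mulVec_eq_zero hdet hMy
  have hpos : 0 < s := h1
  have := ((hmemS _).mp (e ⟨0, hpos⟩).2).1
  exact this (congrFun hy0 ⟨0, hpos⟩)
end
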